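/- Let P₁, ..., P_k ∈ M and suppose each of 1/P₁, ..., 1/P_k has a good approximation. Then 1/(P₁·P₂·...·P_k) has a good approximation. -/

import Mathlib

open Polynomial
open scoped Classical

noncomputable section

/-- The set `M` of nonzero polynomials that are real and nonnegative on the line
`Re x = 1/2`. -/
def MM : Set ℂ[X] :=
  {G | G ≠ 0 ∧ ∀ x : ℂ, x.re = 1 / 2 → ∃ r : ℝ, 0 ≤ r ∧ G.eval x = (r : ℂ)}

/-- `G` has `a`-bounded argument: `G(x) ≠ 0` and `arg G(x) ∈ (−a, a)` for all `x` on the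
imaginary axis. -/
def BoundedArg (G : ℂ[X]) (a : ℝ) : Prop :=
  ∀ x : ℂ, x.re = 0 → G.eval x ≠ 0 ∧ |(G.eval x).arg| < a

/-- `G` has `ε`-small argument: `arg G(x) ∈ (−ε, ε)` for all `x` on the imaginary axis with
`|x| < 1/ε`. -/
def SmallArg (G : ℂ[X]) (ε : ℝ) : Prop :=
  ∀ x : ℂ, x.re = 0 → ‖x‖ < 1 / ε → |(G.eval x).arg| < ε

/-- `1/G` has a good approximation: there is `0 < a < π/2` such that for every `ε > 0` there
is `F ∈ M` for which `G·F` has `a`-bounded `ε`-small argument. -/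
def GoodApprox (G : ℂ[X]) : Prop :=
  ∃ a : ℝ, 0 < a ∧ a < Real.pi / 2 ∧
    ∀ ε : ℝ, 0 < ε →
      ∃ F ∈ MM, BoundedArg (G * F) a ∧ SmallArg (G * F) ε

/-! The product of approximants `(G F₁)(H F₂)` has small argument near the origin because both
factors do. Away from it one needs one factor to have small argument while the other stays
below its bound. Choose `F₂` first; `arg (H F₂)` tends to `0` along the imaginary axis, because
for `Q ∈ M` we have `Q(x)/Q(x + 1/2) → 1` and `Q(x + 1/2) > 0` there. Then choose `F₁` with
`ε₁` so small that `arg (G F₁)` is small on the whole disc where `arg (H F₂)` is not. -/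

open Filter Topology Bornology Asymptotics Complex Real

namespace Polynomial

variable {𝕜 : Type*} [NormedField 𝕜]

theorem eventually_cobounded_eval_ne_zero {P : 𝕜[X]} (hP : P ≠ 0) :
    ∀ᶠ z in cobounded 𝕜, P.eval z ≠ 0 := by
  have hle : cobounded 𝕜 ≤ Filter.cofinite := fun s hs =>
    compl_compl s ▸ isBounded_def.mp (Set.Finite.isBounded hs)
  exact hle (eventually_cofinite_not_isRoot hP)

theorem isEquivalent_cobounded_eval_add (P : 𝕜[X]) (w : 𝕜) :
    (fun z => P.eval (z + w)) ~[cobounded 𝕜] P.eval := by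
  rcases eq_or_ne P 0 with rfl | hP
  · simp only [eval_zero]; exact IsEquivalent.refl
  have hdeg : (taylor w P - P).degree < P.degree := by
    simpa only [degree_taylor] using degree_sub_lt_left (degree_taylor P w)
      ((taylor_eq_zero w P).not.mpr hP) (leadingCoeff_taylor w P)
  have hsub : (fun z => P.eval (z + w)) - P.eval = (taylor w P - P).eval := by
    ext z; simp [taylor_eval]
  rw [IsEquivalent, hsub]
  exact isLittleO_cobounded_of_degree_lt hdeg

theorem tendsto_eval_div_eval_add_cobounded {P : 𝕜[X]} (hP : P ≠ 0) (w : 𝕜) :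
    Tendsto (fun z => P.eval z / P.eval (z + w)) (cobounded 𝕜) (𝓝 1) := by
  have hne : ∀ᶠ z in cobounded 𝕜, P.eval (z + w) ≠ 0 :=
    (eventually_cobounded_eval_ne_zero ((taylor_eq_zero w P).not.mpr hP)).mono
      fun z hz => by rwa [taylor_eval] at hz
  exact (isEquivalent_iff_tendsto_one hne).mp (isEquivalent_cobounded_eval_add P w).symm

end Polynomial

theorem Complex.abs_arg_mul_lt {z w : ℂ} (hz : z ≠ 0) (hw : w ≠ 0) {a b : ℝ}
    (hza : |z.arg| < a) (hwb : |w.arg| < b) (hab : a + b ≤ π) : |(z * w).arg| < a + b := by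
  have hsum : |z.arg + w.arg| < a + b := (abs_add_le _ _).trans_lt (add_lt_add hza hwb)
  have hπ := abs_lt.mp (hsum.trans_le hab)
  rwa [arg_mul hz hw ⟨hπ.1, hπ.2.le⟩]

theorem one_mem_MM : (1 : ℂ[X]) ∈ MM :=
  ⟨one_ne_zero, fun _ _ => ⟨1, zero_le_one, by simp⟩⟩

theorem mul_mem_MM {G H : ℂ[X]} (hG : G ∈ MM) (hH : H ∈ MM) : G * H ∈ MM := by
  refine ⟨mul_ne_zero hG.1 hH.1, fun x hx => ?_⟩
  obtain ⟨r, hr0, hr⟩ := hG.2 x hx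
  obtain ⟨s, hs0, hs⟩ := hH.2 x hx
  exact ⟨r * s, mul_nonneg hr0 hs0, by simp [hr, hs]⟩

theorem eventually_cobounded_abs_arg_eval_lt {Q : ℂ[X]} (hQ : Q ∈ MM) {δ : ℝ} (hδ : 0 < δ) :
    ∀ᶠ z in cobounded ℂ, z.re = 0 → |(Q.eval z).arg| < δ := by
  have hratio := tendsto_eval_div_eval_add_cobounded hQ.1 (1 / 2)
  have harg : Tendsto (fun z => (Q.eval z / Q.eval (z + 1 / 2)).arg) (cobounded ℂ) (𝓝 0) :=
    arg_one ▸ (continuousAt_arg one_mem_slitPlane).tendsto.comp hratio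
  filter_upwards [harg (Metric.ball_mem_nhds 0 hδ), hratio.eventually_ne one_ne_zero]
    with z hsmall hratio_ne hre
  have hne : Q.eval (z + 1 / 2) ≠ 0 := (div_ne_zero_iff.mp hratio_ne).2
  obtain ⟨r, hr0, hr⟩ := hQ.2 (z + 1 / 2) (by simp [hre])
  have hr_pos : 0 < r := hr0.lt_of_ne fun h => hne (by rw [hr, ← h, ofReal_zero])
  have hfactor : Q.eval z = r * (Q.eval z / Q.eval (z + 1 / 2)) := by
    rw [← hr, mul_div_cancel₀ _ hne]
  rw [hfactor, arg_real_mul _ hr_pos]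
  simpa only [Set.mem_preimage, Metric.mem_ball, Real.dist_eq, sub_zero] using hsmall

theorem goodApprox_one : GoodApprox 1 := by
  refine ⟨π / 4, by positivity, by linarith [pi_pos], fun ε hε => ⟨1, one_mem_MM, ?_, ?_⟩⟩
  · intro x _
    simp [pi_pos]
  · intro x _ _
    simpa using hε

theorem GoodApprox.mul {G H : ℂ[X]} (hG : GoodApprox G) (hH : GoodApprox H) (hHM : H ∈ MM) :
    GoodApprox (G * H) := by
  obtain ⟨a₁, ha₁0, ha₁, hG⟩ := hG
  obtain ⟨a₂, -, ha₂, hH⟩ := hH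
  set A := max a₁ a₂
  set η := (π / 2 - A) / 2
  have hA0 : 0 < A := ha₁0.trans_le (le_max_left _ _)
  have hA : A < π / 2 := max_lt ha₁ ha₂
  have hη : 0 < η := by simp only [η]; linarith
  have hAη : A + η < π / 2 := by simp only [η]; linarith
  refine ⟨A + η, by positivity, hAη, fun ε hε => ?_⟩
  set ε₂ := min (ε / 2) η
  have hε₂ : 0 < ε₂ := by positivity
  obtain ⟨F₂, hF₂, hB₂, hS₂⟩ := hH ε₂ hε₂
  obtain ⟨T, -, hT⟩ := hasBasis_cobounded_norm.eventually_iff.mp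
    (eventually_cobounded_abs_arg_eval_lt (mul_mem_MM hHM hF₂) hε₂)
  set ε₁ := min ε₂ (max T 1)⁻¹
  have hε₁ : 0 < ε₁ := by positivity
  obtain ⟨F₁, hF₁, hB₁, hS₁⟩ := hG ε₁ hε₁
  have hε₁₂ : ε₁ ≤ ε₂ := min_le_left _ _
  have hε₂η : ε₂ ≤ η := min_le_right _ _
  have hε₂ε : ε₂ ≤ ε / 2 := min_le_left _ _
  have hTε : T ≤ 1 / ε₁ := (le_max_left T 1).trans <|
    (le_one_div (by positivity) hε₁).mpr (by simpa only [one_div] using min_le_right ε₂ _)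
  have heval : ∀ x, (G * H * (F₁ * F₂)).eval x = (G * F₁).eval x * (H * F₂).eval x :=
    fun x => by rw [mul_mul_mul_comm, eval_mul]
  refine ⟨F₁ * F₂, mul_mem_MM hF₁ hF₂, fun x hx => ?_, fun x hx hxε => ?_⟩
  · obtain ⟨hz₁, harg₁⟩ := hB₁ x hx
    obtain ⟨hz₂, harg₂⟩ := hB₂ x hx
    refine ⟨heval x ▸ mul_ne_zero hz₁ hz₂, heval x ▸ ?_⟩
    rcases lt_or_ge ‖x‖ (1 / ε₁) with hnear | hfar
    · rw [add_comm]
      exact abs_arg_mul_lt hz₁ hz₂ ((hS₁ x hx hnear).trans_le (hε₁₂.trans hε₂η))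
        (harg₂.trans_le (le_max_right _ _)) (by linarith [pi_pos])
    · exact abs_arg_mul_lt hz₁ hz₂ (harg₁.trans_le (le_max_left _ _))
        ((hT (hTε.trans hfar) hx).trans_le hε₂η) (by linarith [pi_pos])
  · obtain ⟨hz₁, -⟩ := hB₁ x hx
    obtain ⟨hz₂, -⟩ := hB₂ x hx
    have hεε₂ : 1 / ε ≤ 1 / ε₂ := one_div_le_one_div_of_le hε₂ (by linarith)
    have hε₂ε₁ : 1 / ε₂ ≤ 1 / ε₁ := one_div_le_one_div_of_le hε₁ hε₁₂
    rw [heval]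
    calc _ < ε₁ + ε₂ := abs_arg_mul_lt hz₁ hz₂ (hS₁ x hx (by linarith)) (hS₂ x hx (by linarith))
          (by linarith [pi_pos])
      _ ≤ ε := by linarith

theorem goodApprox_prod {ι : Type*} (s : Finset ι) (P : ι → ℂ[X]) (hM : ∀ i ∈ s, P i ∈ MM)
    (hP : ∀ i ∈ s, GoodApprox (P i)) : GoodApprox (∏ i ∈ s, P i) :=
  (Finset.prod_induction P (fun Q => Q ∈ MM ∧ GoodApprox Q)
    (fun _ _ hG hH => ⟨mul_mem_MM hG.1 hH.1, hG.2.mul hH.2 hH.1⟩) ⟨one_mem_MM, goodApprox_one⟩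
    fun i hi => ⟨hM i hi, hP i hi⟩).2

/-- if `P₁, …, P_k ∈ M` and each `1/Pᵢ` has a good approximation, then
`1/(P₁ ⋯ P_k)` has a good approximation. -/
theorem stmt17 (k : ℕ) (Ps : Fin k → ℂ[X])
    (hM : ∀ i, Ps i ∈ MM) (hgood : ∀ i, GoodApprox (Ps i)) :
    GoodApprox (∏ i, Ps i) :=
  goodApprox_prod _ Ps (fun i _ => hM i) fun i _ => hgood i

end
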